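/- Under the two-groups model, let R = R(p_1,…,p_m) ∈ {0,1,…,m} be a measurable rejection-count rule rejecting the R hypotheses with the smallest p-values, and let the procedure 𝓡^(−1) reject the max(R−1, 0) hypotheses with the smallest p-values. Then E[L_λ(H, 𝓡) − L_λ(H, 𝓡^(−1))] = ((1+λ)/m)·(P{H_(R) = 0, R > 0} − α·P{R > 0}), where H_(R) is the hypothesis indicator paired with the largest rejected p-value. -/

import Mathlib

open MeasureTheory ProbabilityTheory Filter

noncomputable section

/-- The uniform distribution on `[0,1]` (the null `p`-value distribution). -/
def uniform01 : Measure ℝ := volume.restrict (Set.Icc 0 1)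

/-- `orderStat m p k` is the `k`-th order statistic `p_(k)` of `p_1, …, p_m` (1-indexed),
with the conventions `p_(0) = 0` and `p_(k) = 0` for `k > m`. -/
def orderStat (m : ℕ) (p : Fin m → ℝ) (k : ℕ) : ℝ :=
  if h : 1 ≤ k ∧ k ≤ m then p (Tuple.sort p ⟨k - 1, by omega⟩) else 0

/-- The SL rejection count at level `q`: the largest minimizer over `k ∈ {0, …, m}`
of `p_(k) - q k / m`. -/
def slCount (m : ℕ) (q : ℝ) (p : Fin m → ℝ) : ℕ :=
  sSup {k | k ≤ m ∧ ∀ j ≤ m,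
    orderStat m p k - q * k / m ≤ orderStat m p j - q * j / m}

/-- The SL rejection threshold `τ_q = p_(R_q)`. -/
def slThreshold (m : ℕ) (q : ℝ) (p : Fin m → ℝ) : ℝ :=
  orderStat m p (slCount m q p)

/-- The empirical cdf `F_m` of `p_1, …, p_m`. -/
def ecdf (m : ℕ) (p : Fin m → ℝ) (t : ℝ) : ℝ :=
  ((Finset.univ.filter fun i => p i ≤ t).card : ℝ) / m

/-- The alternative `p`-value distribution, with density `f1` on `[0,1]`. -/
def altMeasure (f1 : ℝ → ℝ) : Measure ℝ :=
  uniform01.withDensity fun t => ENNReal.ofReal (f1 t)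

/-- The two-groups distribution of a pair `(H_i, p_i)`: `H_i ~ Bernoulli(1 - π0)`
(`false` meaning the null holds), `p_i | H_i = false ~ Unif[0,1]`, and
`p_i | H_i = true` has density `f1`. -/
def pairMeasure (π0 : ℝ) (f1 : ℝ → ℝ) : Measure (Bool × ℝ) :=
  ENNReal.ofReal π0 • (Measure.dirac false).prod uniform01
    + ENNReal.ofReal (1 - π0) • (Measure.dirac true).prod (altMeasure f1)

/-- The joint distribution of the i.i.d. pairs `(H_i, p_i)`, `i = 1, …, m`. -/
def jointMeasure (m : ℕ) (π0 : ℝ) (f1 : ℝ → ℝ) : Measure (Fin m → Bool × ℝ) :=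
  Measure.pi fun _ => pairMeasure π0 f1

/-- The `p`-values of an outcome of the two-groups model. -/
def pvals (m : ℕ) (x : Fin m → Bool × ℝ) (i : Fin m) : ℝ := (x i).2

/-- The marginal `p`-value mixture density `f = π0 + (1 - π0) f1`. -/
def mixDensity (π0 : ℝ) (f1 : ℝ → ℝ) (t : ℝ) : ℝ := π0 + (1 - π0) * f1 t

/-- The local false discovery rate `lfdr(t) = π0 / f(t)`. -/
def lfdr (π0 : ℝ) (f1 : ℝ → ℝ) (t : ℝ) : ℝ := π0 / mixDensity π0 f1 t

/-- The event that, rejecting the `R` hypotheses with the smallest `p`-values,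
the last rejection is a false discovery: `R > 0` and `H_(R) = 0`, where `H_(R)` is the
hypothesis indicator paired with the `R`-th smallest `p`-value. -/
def lastRejNull (m : ℕ) (R : ℕ) (x : Fin m → Bool × ℝ) : Prop :=
  ∃ h : 1 ≤ R ∧ R ≤ m,
    (x (Tuple.sort (pvals m x) ⟨R - 1, by omega⟩)).1 = false

/-- The maximum of `g` over a finite set `S`, with the convention that the
maximum over the empty set is `0`. -/
def maxOver {ι : Type*} (S : Finset ι) (g : ι → ℝ) : ℝ :=
  if h : S.Nonempty then S.sup' h g else 0

/-- The SL rejection set `𝓡_q = {i : p_i ≤ τ_q}`. -/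
def rejSet (m : ℕ) (q : ℝ) (p : Fin m → ℝ) : Finset (Fin m) :=
  Finset.univ.filter fun i => p i ≤ slThreshold m q p

/-- The weighted classification loss `L_λ(H, 𝓡) = ((1+λ)V - R)/m` incurred when the `r`
hypotheses with the smallest `p`-values are rejected: `V` is the number of rejected
nulls among the first `r` sorted positions. -/
def rejLoss (m : ℕ) (lam : ℝ) (r : ℕ) (x : Fin m → Bool × ℝ) : ℝ :=
  ((1 + lam) * ((Finset.univ.filter fun j : Fin m =>
        (j : ℕ) < r ∧ (x (Tuple.sort (pvals m x) j)).1 = false).card : ℝ)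
      - (r : ℝ)) / m


/-! Passing from `𝓡^(−1)` to `𝓡` adds exactly one rejection, namely the `R`-th smallest
`p`-value, when `R > 0` and nothing otherwise. Hence pointwise
`L_λ(H, 𝓡) - L_λ(H, 𝓡^(−1)) = ((1 + λ) 1{H_(R) = 0, R > 0} - 1{R > 0}) / m`,
and the identity follows by integrating, since `1/m = ((1 + λ)/m) α`. -/

open Finset in
theorem card_filter_lt_succ_and {m : ℕ} (P : Fin m → Prop) [DecidablePred P] (r : ℕ) :
    (univ.filter fun j : Fin m => (j : ℕ) < r + 1 ∧ P j).card
      = (univ.filter fun j : Fin m => (j : ℕ) < r ∧ P j).card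
        + if ∃ h : r < m, P ⟨r, h⟩ then 1 else 0 := by
  have hlast : (if ∃ h : r < m, P ⟨r, h⟩ then 1 else 0)
      = ∑ j : Fin m, if (j : ℕ) = r ∧ P j then 1 else 0 := by
    by_cases hr : r < m
    · have hval : ∀ j : Fin m, (j : ℕ) = r ↔ j = ⟨r, hr⟩ := fun j => by rw [Fin.ext_iff]
      simp [hval, ite_and, hr]
    · rw [if_neg (fun ⟨h, _⟩ => hr h)]
      exact (sum_eq_zero fun j _ => if_neg fun ⟨hj, _⟩ => hr (hj ▸ j.isLt)).symm
  rw [hlast, card_filter, card_filter, ← sum_add_distrib]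
  refine sum_congr rfl fun j _ => ?_
  by_cases hP : P j
  · simp only [hP, and_true]
    split_ifs <;> omega
  · simp [hP]

theorem measurableSet_sort_eq {α : Type*} [LinearOrder α] [TopologicalSpace α]
    [OrderClosedTopology α] [SecondCountableTopology α] [MeasurableSpace α]
    [OpensMeasurableSpace α] {m : ℕ} (σ : Equiv.Perm (Fin m)) :
    MeasurableSet {p : Fin m → α | Tuple.sort p = σ} := by
  simp_rw [eq_comm (a := Tuple.sort _), Tuple.eq_sort_iff, Monotone, Function.comp_apply]
  measurability

theorem measurable_pvals (m : ℕ) : Measurable (pvals m) :=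
  measurable_pi_lambda _ fun i => measurable_snd.comp (measurable_pi_apply i)

theorem lastRejNull_succ_iff (m r : ℕ) (x : Fin m → Bool × ℝ) :
    lastRejNull m (r + 1) x ↔ ∃ h : r < m, (x (Tuple.sort (pvals m x) ⟨r, h⟩)).1 = false :=
  ⟨fun ⟨h, hx⟩ => ⟨h.2, hx⟩, fun ⟨h, hx⟩ => ⟨⟨r.succ_pos, h⟩, hx⟩⟩

open Classical in
theorem rejLoss_sub_rejLoss_pred (m : ℕ) (lam : ℝ) (x : Fin m → Bool × ℝ) (r : ℕ) :
    rejLoss m lam r x - rejLoss m lam (r - 1) x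
      = (1 + lam) / m * (if lastRejNull m r x then 1 else 0)
        - 1 / m * (if 0 < r then 1 else 0) := by
  rcases r with _ | r
  · simp [lastRejNull]
  · simp only [rejLoss, Nat.add_sub_cancel, card_filter_lt_succ_and, ← lastRejNull_succ_iff,
      if_pos r.succ_pos]
    push_cast
    split_ifs <;> ring

theorem measurableSet_lastRejNull (m r : ℕ) :
    MeasurableSet {x : Fin m → Bool × ℝ | lastRejNull m r x} := by
  -- `lastRejNull m r x` depends on the `p`-values only through the sorting permutation.
  have hsplit : {x | lastRejNull m r x} = ⋃ σ : Equiv.Perm (Fin m),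
      pvals m ⁻¹' {p | Tuple.sort p = σ}
        ∩ {x | ∃ h : 1 ≤ r ∧ r ≤ m, (x (σ ⟨r - 1, by omega⟩)).1 = false} := by
    ext x
    simp [lastRejNull]
  rw [hsplit]
  exact .iUnion fun σ =>
    (measurable_pvals m (measurableSet_sort_eq σ)).inter (by measurability)

theorem measurableSet_lastRejNull_comp {m : ℕ} {R : (Fin m → ℝ) → ℕ} (hR : Measurable R) :
    MeasurableSet {x | lastRejNull m (R (pvals m x)) x} := by
  have hsplit : {x | lastRejNull m (R (pvals m x)) x}
      = ⋃ r, pvals m ⁻¹' (R ⁻¹' {r}) ∩ {x | lastRejNull m r x} := by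
    ext x
    simp
  rw [hsplit]
  exact .iUnion fun r => (measurable_pvals m (hR (measurableSet_singleton r))).inter
    (measurableSet_lastRejNull m r)

theorem integral_rejLoss_sub_rejLoss_pred {m : ℕ} (μ : Measure (Fin m → Bool × ℝ))
    [IsFiniteMeasure μ] (lam : ℝ) {R : (Fin m → ℝ) → ℕ} (hR : Measurable R) :
    ∫ x, (rejLoss m lam (R (pvals m x)) x - rejLoss m lam (R (pvals m x) - 1) x) ∂μ
      = (1 + lam) / m * μ.real {x | lastRejNull m (R (pvals m x)) x}
        - 1 / m * μ.real {x | 0 < R (pvals m x)} := by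
  set S := {x | lastRejNull m (R (pvals m x)) x}
  set T := {x | 0 < R (pvals m x)}
  have hS : MeasurableSet S := measurableSet_lastRejNull_comp hR
  have hT : MeasurableSet T := measurableSet_lt measurable_const (hR.comp (measurable_pvals m))
  have hpointwise :
      (fun x => rejLoss m lam (R (pvals m x)) x - rejLoss m lam (R (pvals m x) - 1) x)
      = fun x => (1 + lam) / m * S.indicator 1 x - 1 / m * T.indicator 1 x := by
    ext x
    simp only [rejLoss_sub_rejLoss_pred, Set.indicator_apply, Pi.one_apply]
    rfl
  rw [hpointwise, integral_sub, integral_const_mul, integral_const_mul,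
    integral_indicator_one hS, integral_indicator_one hT]
  · exact ((integrable_const 1).indicator hS).const_mul _
  · exact ((integrable_const 1).indicator hT).const_mul _

theorem isFiniteMeasure_altMeasure {f1 : ℝ → ℝ} (hf1int : ∫ t in Set.Icc (0:ℝ) 1, f1 t = 1) :
    IsFiniteMeasure (altMeasure f1) :=
  isFiniteMeasure_withDensity_ofReal
    (Integrable.of_integral_ne_zero (by simp [uniform01, hf1int])).2

theorem isFiniteMeasure_pairMeasure (π0 : ℝ) {f1 : ℝ → ℝ}
    (hf1int : ∫ t in Set.Icc (0:ℝ) 1, f1 t = 1) : IsFiniteMeasure (pairMeasure π0 f1) := by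
  have : IsFiniteMeasure uniform01 := by unfold uniform01; infer_instance
  have := isFiniteMeasure_altMeasure hf1int
  have := (Measure.dirac false).prod uniform01 |>.smul_finite (ENNReal.ofReal_ne_top (r := π0))
  have := (Measure.dirac true).prod (altMeasure f1)
    |>.smul_finite (ENNReal.ofReal_ne_top (r := 1 - π0))
  unfold pairMeasure
  infer_instance

theorem stmt8_general (m : ℕ) (π0 : ℝ) (f1 : ℝ → ℝ)
    (hf1int : ∫ t in Set.Icc (0:ℝ) 1, f1 t = 1)
    (lam α : ℝ) (hlam : 0 < lam) (hα : α = 1 / (1 + lam))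
    (R : (Fin m → ℝ) → ℕ) (hRmeas : Measurable R) :
    ∫ x, (rejLoss m lam (R (pvals m x)) x - rejLoss m lam (R (pvals m x) - 1) x)
        ∂ jointMeasure m π0 f1
      = ((1 + lam) / m) *
          ((jointMeasure m π0 f1 {x | lastRejNull m (R (pvals m x)) x}).toReal
            - α * (jointMeasure m π0 f1 {x | 0 < R (pvals m x)}).toReal) := by
  have := isFiniteMeasure_pairMeasure π0 hf1int
  have : 1 + lam ≠ 0 := by linarith
  rw [jointMeasure, integral_rejLoss_sub_rejLoss_pred _ lam hRmeas, hα]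
  simp only [measureReal_def]
  field_simp

/-- Under the two-groups model, for a measurable rejection-count rule
`R = R(p_1, …, p_m) ∈ {0, …, m}` rejecting the `R` smallest `p`-values, and `𝓡^(−1)`
rejecting the `max(R-1, 0)` smallest, we have
`E[L_λ(H,𝓡) - L_λ(H,𝓡^(−1))] = ((1+λ)/m)·(P{H_(R) = 0, R > 0} - α·P{R > 0})`. -/
theorem stmt8 (m : ℕ) (hm : 0 < m) (π0 : ℝ) (hπ0 : 0 ≤ π0) (hπ1 : π0 ≤ 1)
    (f1 : ℝ → ℝ) (hf1m : Measurable f1) (hf1nn : ∀ t, 0 ≤ f1 t)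
    (hf1int : ∫ t in Set.Icc (0:ℝ) 1, f1 t = 1)
    (lam α : ℝ) (hlam : 0 < lam) (hα : α = 1 / (1 + lam))
    (R : (Fin m → ℝ) → ℕ) (hRmeas : Measurable R) (hRle : ∀ p, R p ≤ m) :
    ∫ x, (rejLoss m lam (R (pvals m x)) x - rejLoss m lam (R (pvals m x) - 1) x)
        ∂ jointMeasure m π0 f1
      = ((1 + lam) / m) *
          ((jointMeasure m π0 f1 {x | lastRejNull m (R (pvals m x)) x}).toReal
            - α * (jointMeasure m π0 f1 {x | 0 < R (pvals m x)}).toReal) :=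
  stmt8_general m π0 f1 hf1int lam α hlam hα R hRmeas
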